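/- arXiv:1403.2789 — 2 statements merged into one kernel-verified Lean document; each statement's English description precedes it below -/
import Mathlib

section
/- Let (W_n)_{n≥1} be independent integer-valued random variables with sup_n P(|W_n| = y) ≤ C e^{-c|y|} and sup_n E[W_n] < 0. Let a_n → +∞ and r > 0. Then there exist constants C' > 0 and β'' > 0 such that for all n, P( Σ_{k=1}^{⌊n a_n⌋} W_k ≥ -r n √(a_n) ) ≤ C' e^{-β'' n a_n}. -/
/-!
Chernoff's method with a uniform bound on the moment generating functions. The exponential
tails bound the weighted second moments `E[W² e^{(c/2)|W|}]` uniformly, and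
`e^u ≤ 1 + u + u² e^{|u|}` then gives `E[e^{tW_k}] ≤ 1 - t m + t² K ≤ e^{-tm/2}` for a small
`t > 0`, where `-m < 0` bounds the means. By independence the sum of `N = ⌊n a_n⌋` terms
exceeds `-r n √a_n` with probability at most `e^{t r n √a_n - N t m / 2}`, and since
`√a_n = o(a_n)` this is eventually `≤ e^{tm/2} e^{-(tm/4) n a_n}`; the finitely many remaining
`n` are absorbed into the constant.
-/

open MeasureTheory ProbabilityTheory Real Filter

lemma Real.exp_le_one_add_add_sq_mul_exp_abs (u : ℝ) : exp u ≤ 1 + u + u ^ 2 * exp |u| := by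
  rcases le_or_gt 0 u with hu | hu
  · rw [abs_of_nonneg hu]
    have h := mul_le_mul_of_nonneg_right (add_one_le_exp (-u)) (exp_pos u).le
    rw [← exp_add, neg_add_cancel, exp_zero] at h
    nlinarith [mul_nonneg hu (exp_pos u).le]
  · rw [abs_of_neg hu]
    have h := mul_le_mul_of_nonneg_left (add_one_le_exp (-u)) (exp_pos u).le
    rw [← exp_add, add_neg_cancel, exp_zero] at h
    nlinarith [one_le_exp (neg_nonneg.2 hu.le), add_one_le_exp u]

lemma summable_int_sq_mul_exp_neg_mul_abs {b : ℝ} (hb : 0 < b) :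
    Summable fun y : ℤ => (y : ℝ) ^ 2 * exp (-b * |(y : ℝ)|) := by
  have hnat : Summable fun n : ℕ => (n : ℝ) ^ 2 * exp (-b * n) := by
    simpa [← exp_nat_mul, mul_comm] using summable_pow_mul_geometric_of_norm_lt_one 2
      (r := exp (-b)) (by simpa [abs_of_pos (exp_pos _)] using hb)
  exact .of_nat_of_neg (by simpa using hnat) (by simpa using hnat)

lemma le_iSup_of_iSup_lt_zero {ι : Sort*} {f : ι → ℝ} (h : ⨆ i, f i < 0) (i : ι) :
    f i ≤ ⨆ i, f i :=
  le_ciSup (not_not.1 fun hf => h.ne (Real.iSup_of_not_bddAbove hf)) i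

lemma eventually_mul_sqrt_le_mul {ι : Type*} {l : Filter ι} {a : ι → ℝ}
    (ha : Tendsto a l atTop) (ρ : ℝ) {κ : ℝ} (hκ : 0 < κ) :
    ∀ᶠ i in l, ρ * √(a i) ≤ κ * a i := by
  filter_upwards [(tendsto_sqrt_atTop.comp ha).eventually_ge_atTop (ρ / κ),
    ha.eventually_ge_atTop 0] with i hi ha0
  calc ρ * √(a i) = κ * (ρ / κ) * √(a i) := by field_simp
    _ ≤ κ * √(a i) * √(a i) := by gcongr; exact hi
    _ = κ * a i := by rw [mul_assoc, mul_self_sqrt ha0]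

lemma exists_pos_forall_le_mul_of_eventually_le {f g : ℕ → ℝ} {C : ℝ} (hC : 0 < C)
    (hf : ∀ n, f n ≤ 1) (hg : ∀ n, 0 < g n) (hev : ∀ᶠ n in atTop, f n ≤ C * g n) :
    ∃ C' : ℝ, 0 < C' ∧ ∀ n, f n ≤ C' * g n := by
  obtain ⟨n₀, hn₀⟩ := eventually_atTop.1 hev
  have hsum : 0 ≤ ∑ k ∈ Finset.range n₀, (g k)⁻¹ :=
    Finset.sum_nonneg fun k _ => (inv_pos.2 (hg k)).le
  refine ⟨C + ∑ k ∈ Finset.range n₀, (g k)⁻¹, by positivity, fun n => ?_⟩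
  rcases lt_or_ge n n₀ with hn | hn
  · calc f n ≤ (g n)⁻¹ * g n := by rw [inv_mul_cancel₀ (hg n).ne']; exact hf n
      _ ≤ (C + ∑ k ∈ Finset.range n₀, (g k)⁻¹) * g n := by
        gcongr
        · exact (hg n).le
        · exact le_add_of_nonneg_of_le hC.le
            (Finset.single_le_sum (f := fun k => (g k)⁻¹)
              (fun k _ => (inv_pos.2 (hg k)).le) (Finset.mem_range.2 hn))
  · exact (hn₀ n hn).trans (by gcongr; exact (hg n).le; linarith)

lemma exp_mul_sqrt_mul_exp_neg_pow_floor_le {b ρ x A : ℝ} (hx : 0 ≤ x) (hb : 0 ≤ b)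
    (hρ : ρ * √A ≤ b / 2 * A) :
    exp (ρ * x * √A) * exp (-b) ^ ⌊x * A⌋₊ ≤ exp b * exp (-(b / 2) * x * A) := by
  rw [← exp_nat_mul, ← exp_add, ← exp_add]
  have hfloor := Nat.lt_floor_add_one (x * A)
  refine exp_le_exp.2 ?_
  nlinarith [mul_le_mul_of_nonneg_left hρ hx]

section DiscreteMoments

variable {Ω : Type*} [MeasurableSpace Ω] {μ : Measure Ω}

lemma lintegral_comp_le_tsum_mul {α : Type*} [Countable α] [MeasurableSpace α]
    [DiscreteMeasurableSpace α] {X : Ω → α} (hX : Measurable X) {p : α → ENNReal}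
    (hp : ∀ y, μ (X ⁻¹' {y}) ≤ p y) (f : α → ENNReal) :
    ∫⁻ ω, f (X ω) ∂μ ≤ ∑' y, f y * p y := by
  rw [← lintegral_map .of_discrete hX, lintegral_countable']
  refine ENNReal.tsum_le_tsum fun y => ?_
  rw [Measure.map_apply hX (measurableSet_singleton y)]
  gcongr
  exact hp y

lemma integrable_comp_and_integral_comp_le_tsum_mul [IsFiniteMeasure μ] {α : Type*} [Countable α]
    [MeasurableSpace α] [DiscreteMeasurableSpace α] {X : Ω → α} (hX : Measurable X)
    {g p : α → ℝ} (hg : 0 ≤ g) (hp : ∀ y, μ.real (X ⁻¹' {y}) ≤ p y)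
    (hsum : Summable fun y => g y * p y) :
    Integrable (fun ω => g (X ω)) μ ∧ ∫ ω, g (X ω) ∂μ ≤ ∑' y, g y * p y := by
  have hp0 : ∀ y, 0 ≤ p y := fun y => measureReal_nonneg.trans (hp y)
  have hgX : 0 ≤ᵐ[μ] fun ω => g (X ω) := .of_forall fun ω => hg (X ω)
  have hmeas : AEStronglyMeasurable (fun ω => g (X ω)) μ :=
    ((Measurable.of_discrete (f := g)).comp hX).aestronglyMeasurable
  have hlint : ∫⁻ ω, ENNReal.ofReal (g (X ω)) ∂μ ≤ ENNReal.ofReal (∑' y, g y * p y) := by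
    refine (lintegral_comp_le_tsum_mul hX (p := fun y => ENNReal.ofReal (p y)) (fun y => ?_)
      (fun y => ENNReal.ofReal (g y))).trans_eq ?_
    · rw [← ofReal_measureReal]; exact ENNReal.ofReal_le_ofReal (hp y)
    · rw [ENNReal.ofReal_tsum_of_nonneg (fun y => mul_nonneg (hg y) (hp0 y)) hsum]
      exact tsum_congr fun y => (ENNReal.ofReal_mul (hg y)).symm
  refine ⟨⟨hmeas, (hasFiniteIntegral_iff_ofReal hgX).2 (hlint.trans_lt ENNReal.ofReal_lt_top)⟩,
    ?_⟩
  rw [integral_eq_lintegral_of_nonneg_ae hgX hmeas]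
  exact ENNReal.toReal_le_of_le_ofReal (tsum_nonneg fun y => mul_nonneg (hg y) (hp0 y)) hlint

lemma integrable_and_integral_sq_mul_exp_abs_le_of_tail {X : Ω → ℤ} [IsFiniteMeasure μ]
    (hX : Measurable X) {C c : ℝ} (hc : 0 < c)
    (htail : ∀ y : ℤ, (μ {ω | |X ω| = y}).toReal ≤ C * exp (-c * |(y : ℝ)|)) :
    Integrable (fun ω => (X ω : ℝ) ^ 2 * exp (c / 2 * |(X ω : ℝ)|)) μ ∧
      ∫ ω, (X ω : ℝ) ^ 2 * exp (c / 2 * |(X ω : ℝ)|) ∂μ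
        ≤ C * ∑' y : ℤ, (y : ℝ) ^ 2 * exp (-(c / 2) * |(y : ℝ)|) := by
  have hp : ∀ y : ℤ, μ.real (X ⁻¹' {y}) ≤ C * exp (-c * |(y : ℝ)|) := fun y =>
    calc μ.real (X ⁻¹' {y}) ≤ μ.real {ω | |X ω| = |y|} :=
          measureReal_mono fun ω (h : X ω = y) => by simp [h]
      _ ≤ C * exp (-c * |(y : ℝ)|) := by simpa [measureReal_def] using htail |y|
  have hprod : ∀ y : ℤ, (y : ℝ) ^ 2 * exp (c / 2 * |(y : ℝ)|) * (C * exp (-c * |(y : ℝ)|))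
      = C * ((y : ℝ) ^ 2 * exp (-(c / 2) * |(y : ℝ)|)) := fun y => by
    rw [mul_mul_mul_comm, ← exp_add]; ring_nf
  have hsum : Summable fun y : ℤ =>
      (y : ℝ) ^ 2 * exp (c / 2 * |(y : ℝ)|) * (C * exp (-c * |(y : ℝ)|)) := by
    simpa only [hprod] using (summable_int_sq_mul_exp_neg_mul_abs (half_pos hc)).mul_left C
  have := integrable_comp_and_integral_comp_le_tsum_mul hX (fun y => by positivity) hp hsum
  simpa only [hprod, tsum_mul_left] using this

end DiscreteMoments

section MomentGenerating

variable {Ω : Type*} [MeasurableSpace Ω] {μ : Measure Ω} [IsProbabilityMeasure μ] {s t : ℝ}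

lemma exp_mul_le_one_add_mul_add_sq_mul_sq_mul_exp_abs (x : ℝ) (ht : 0 ≤ t) (hts : t ≤ s) :
    exp (t * x) ≤ 1 + t * x + t ^ 2 * (x ^ 2 * exp (s * |x|)) := by
  have habs : exp |t * x| ≤ exp (s * |x|) := by
    rw [abs_mul, abs_of_nonneg ht]; gcongr
  calc exp (t * x) ≤ 1 + t * x + (t * x) ^ 2 * exp |t * x| :=
        Real.exp_le_one_add_add_sq_mul_exp_abs _
    _ ≤ 1 + t * x + (t * x) ^ 2 * exp (s * |x|) := by gcongr
    _ = 1 + t * x + t ^ 2 * (x ^ 2 * exp (s * |x|)) := by ring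

variable {X : Ω → ℝ}

lemma integrable_of_integrable_sq_mul_exp_abs (hX : AEMeasurable X μ) (hs : 0 ≤ s)
    (h : Integrable (fun ω => X ω ^ 2 * exp (s * |X ω|)) μ) : Integrable X μ := by
  refine ((integrable_const 1).add h).mono' hX.aestronglyMeasurable (.of_forall fun ω => ?_)
  have h1 : 1 ≤ exp (s * |X ω|) := one_le_exp (by positivity)
  have h2 : 0 ≤ X ω ^ 2 * exp (s * |X ω|) := by positivity
  simp only [Pi.add_apply, Real.norm_eq_abs]
  rcases le_or_gt |X ω| 1 with hx | hx
  · linarith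
  · nlinarith [sq_abs (X ω)]

lemma integrable_exp_mul_of_integrable_sq_mul_exp_abs (hX : AEMeasurable X μ) (ht : 0 ≤ t)
    (hts : t ≤ s) (h : Integrable (fun ω => X ω ^ 2 * exp (s * |X ω|)) μ) :
    Integrable (fun ω => exp (t * X ω)) μ := by
  have hXint := integrable_of_integrable_sq_mul_exp_abs hX (ht.trans hts) h
  refine (((integrable_const 1).add (hXint.abs.const_mul t)).add (h.const_mul (t ^ 2))).mono'
    (hX.const_mul t).exp.aestronglyMeasurable (.of_forall fun ω => ?_)
  rw [Real.norm_of_nonneg (exp_pos _).le]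
  have := exp_mul_le_one_add_mul_add_sq_mul_sq_mul_exp_abs (X ω) ht hts
  have := mul_le_mul_of_nonneg_left (le_abs_self (X ω)) ht
  simp only [Pi.add_apply]
  linarith

lemma mgf_le_one_add_mul_integral_add_sq_mul_integral (hX : AEMeasurable X μ) (ht : 0 ≤ t)
    (hts : t ≤ s) (h : Integrable (fun ω => X ω ^ 2 * exp (s * |X ω|)) μ) :
    mgf X μ t ≤ 1 + t * μ[X] + t ^ 2 * ∫ ω, X ω ^ 2 * exp (s * |X ω|) ∂μ := by
  have hXint := integrable_of_integrable_sq_mul_exp_abs hX (ht.trans hts) h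
  calc mgf X μ t ≤ ∫ ω, 1 + t * X ω + t ^ 2 * (X ω ^ 2 * exp (s * |X ω|)) ∂μ :=
        integral_mono (integrable_exp_mul_of_integrable_sq_mul_exp_abs hX ht hts h)
          (((integrable_const 1).add (hXint.const_mul t)).add (h.const_mul _))
          fun ω => exp_mul_le_one_add_mul_add_sq_mul_sq_mul_exp_abs (X ω) ht hts
    _ = 1 + t * μ[X] + t ^ 2 * ∫ ω, X ω ^ 2 * exp (s * |X ω|) ∂μ := by
      rw [integral_add (f := fun ω => 1 + t * X ω)
          ((integrable_const 1).add (hXint.const_mul t)) (h.const_mul _),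
        integral_add (integrable_const 1) (hXint.const_mul t), integral_const_mul,
        integral_const_mul]
      simp

end MomentGenerating

section Chernoff

variable {Ω ι : Type*} [MeasurableSpace Ω] {μ : Measure Ω} [IsProbabilityMeasure μ]
  {X : ι → Ω → ℝ}

lemma exists_pos_forall_mgf_le_exp_neg (hX : ∀ i, AEMeasurable (X i) μ) {s K m : ℝ} (hs : 0 < s)
    (hm : 0 < m) (hmean : ∀ i, μ[X i] ≤ -m)
    (hint : ∀ i, Integrable (fun ω => X i ω ^ 2 * exp (s * |X i ω|)) μ)
    (hK : ∀ i, ∫ ω, X i ω ^ 2 * exp (s * |X i ω|) ∂μ ≤ K) :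
    ∃ t, 0 < t ∧ t ≤ s ∧ ∀ i, mgf (X i) μ t ≤ exp (-(t * m / 2)) := by
  -- `t ≤ s` makes the second-moment bound applicable, `t K ≤ m / 2` lets the quadratic term
  -- eat at most half of the drift `-t m`.
  set t := min s (m / (2 * (|K| + 1)))
  have ht : 0 < t := lt_min hs (by positivity)
  have htK : t * K ≤ m / 2 :=
    calc t * K ≤ t * (|K| + 1) := by gcongr; linarith [le_abs_self K]
      _ ≤ m / (2 * (|K| + 1)) * (|K| + 1) := by gcongr; exact min_le_right _ _
      _ = m / 2 := by field_simp
  refine ⟨t, ht, min_le_left _ _, fun i => ?_⟩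
  calc mgf (X i) μ t
      ≤ 1 + t * μ[X i] + t ^ 2 * ∫ ω, X i ω ^ 2 * exp (s * |X i ω|) ∂μ :=
        mgf_le_one_add_mul_integral_add_sq_mul_integral (hX i) ht.le (min_le_left _ _) (hint i)
    _ ≤ 1 + t * -m + t * (t * K) := by
        rw [sq, mul_assoc]; gcongr; exacts [hmean i, hK i]
    _ ≤ 1 + -(t * m / 2) := by nlinarith
    _ ≤ exp (-(t * m / 2)) := by linarith [add_one_le_exp (-(t * m / 2))]

lemma measureReal_le_exp_mul_pow_of_mgf_le (hindep : iIndepFun X μ)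
    (hX : ∀ i, Measurable (X i)) {t q : ℝ} (ht : 0 ≤ t)
    (hint : ∀ i, Integrable (fun ω => exp (t * X i ω)) μ) (hmgf : ∀ i, mgf (X i) μ t ≤ q)
    (ε : ℝ) (S : Finset ι) :
    μ.real {ω | ε ≤ ∑ i ∈ S, X i ω} ≤ exp (-t * ε) * q ^ S.card := by
  have hsum := hindep.integrable_exp_mul_sum hX (s := S) fun i _ => hint i
  calc μ.real {ω | ε ≤ ∑ i ∈ S, X i ω} ≤ exp (-t * ε) * mgf (∑ i ∈ S, X i) μ t := by
        simpa only [Finset.sum_apply] using measure_ge_le_exp_mul_mgf ε ht hsum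
    _ ≤ exp (-t * ε) * q ^ S.card := by
        rw [hindep.mgf_sum hX, ← Finset.prod_const]
        gcongr with i
        exacts [fun i _ => mgf_nonneg, hmgf i]

end Chernoff

theorem negative_drift_large_deviation_bound_general
    {Ω : Type*} [MeasurableSpace Ω] (P : Measure Ω) [IsProbabilityMeasure P]
    (W : ℕ → Ω → ℤ) (hmeas : ∀ n, Measurable (W n))
    (hindep : iIndepFun W P)
    (C c : ℝ) (hc : 0 < c)
    (htail : ∀ (n : ℕ) (y : ℤ), (P {ω | |W n ω| = y}).toReal ≤ C * Real.exp (-c * |(y : ℝ)|))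
    (hmean : (⨆ n : ℕ, ∫ ω, (W n ω : ℝ) ∂P) < 0)
    (a : ℕ → ℝ) (ha : Tendsto a atTop atTop)
    (r : ℝ) :
    ∃ C' : ℝ, 0 < C' ∧ ∃ β : ℝ, 0 < β ∧ ∀ n : ℕ,
      P {ω | -(r * n * Real.sqrt (a n)) ≤ (∑ k ∈ Finset.range ⌊(n : ℝ) * a n⌋₊, (W k ω : ℝ))}
        ≤ ENNReal.ofReal (C' * Real.exp (-β * n * a n)) := by
  set m := -(⨆ n : ℕ, ∫ ω, (W n ω : ℝ) ∂P)
  have hm : 0 < m := neg_pos.2 hmean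
  set Y : ℕ → Ω → ℝ := fun k ω => (W k ω : ℝ)
  have hY : ∀ k, Measurable (Y k) := fun k => Measurable.of_discrete.comp (hmeas k)
  have hmoment := fun k => integrable_and_integral_sq_mul_exp_abs_le_of_tail (hmeas k) hc (htail k)
  obtain ⟨t, ht, hts, hmgf⟩ := exists_pos_forall_mgf_le_exp_neg (fun k => (hY k).aemeasurable)
    (half_pos hc) hm (fun k => (le_iSup_of_iSup_lt_zero hmean k).trans_eq (neg_neg _).symm)
    (fun k => (hmoment k).1) (fun k => (hmoment k).2)
  have hchernoff := measureReal_le_exp_mul_pow_of_mgf_le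
    (hindep.comp (fun _ => Int.cast) fun _ => .of_discrete) hY ht.le
    (fun k => integrable_exp_mul_of_integrable_sq_mul_exp_abs (hY k).aemeasurable ht.le hts
      (hmoment k).1) hmgf
  set b := t * m / 2
  have hb : 0 < b := half_pos (mul_pos ht hm)
  have hev : ∀ᶠ n in atTop,
      P.real {ω | -(r * n * √(a n)) ≤ ∑ k ∈ Finset.range ⌊(n : ℝ) * a n⌋₊, Y k ω}
        ≤ exp b * exp (-(b / 2) * n * a n) := by
    filter_upwards [eventually_mul_sqrt_le_mul ha (t * r) (half_pos hb)] with n hn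
    refine (hchernoff _ _).trans ?_
    rw [Finset.card_range, show -t * -(r * n * √(a n)) = t * r * n * √(a n) by ring]
    exact exp_mul_sqrt_mul_exp_neg_pow_floor_le (Nat.cast_nonneg n) hb.le hn
  obtain ⟨C', hC', hbound⟩ := exists_pos_forall_le_mul_of_eventually_le (exp_pos b)
    (fun n => measureReal_le_one) (fun n => exp_pos _) hev
  refine ⟨C', hC', b / 2, half_pos hb, fun n => ?_⟩
  rw [← ofReal_measureReal]
  exact ENNReal.ofReal_le_ofReal (hbound n)

theorem negative_drift_large_deviation_bound
    {Ω : Type*} [MeasurableSpace Ω] (P : Measure Ω) [IsProbabilityMeasure P]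
    (W : ℕ → Ω → ℤ) (hmeas : ∀ n, Measurable (W n))
    (hindep : iIndepFun W P)
    (C c : ℝ) (hC : 0 < C) (hc : 0 < c)
    (htail : ∀ (n : ℕ) (y : ℤ), (P {ω | |W n ω| = y}).toReal ≤ C * Real.exp (-c * |(y : ℝ)|))
    (hmean : (⨆ n : ℕ, ∫ ω, (W n ω : ℝ) ∂P) < 0)
    (a : ℕ → ℝ) (ha_pos : ∀ n, 0 < a n) (ha : Tendsto a atTop atTop)
    (r : ℝ) (hr : 0 < r) :
    ∃ C' : ℝ, 0 < C' ∧ ∃ β : ℝ, 0 < β ∧ ∀ n : ℕ,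
      P {ω | -(r * n * Real.sqrt (a n)) ≤ (∑ k ∈ Finset.range ⌊(n : ℝ) * a n⌋₊, (W k ω : ℝ))}
        ≤ ENNReal.ofReal (C' * Real.exp (-β * n * a n)) :=
  negative_drift_large_deviation_bound_general P W hmeas hindep C c hc htail hmean a ha r
end

section
/- Let f(x) = (1/√(2π)) e^{-x²/2} and Φ(x) = ∫_x^∞ e^{-u²/2} du. Given M ≥ 1 and 0 < ε ≤ ε₀ sufficiently small, there exists σ₀ < ∞ such that for all σ₀ < σ₁ ≤ σ₂, whenever positive sequences (ξ_k)_{k∈ℤ} and (ζ_k)_{k∈ℤ} satisfy ξ_k ≥ ((1-ε)/σ₂) f(k/σ₂) for |k| ≤ Mσ₂ and ζ_k ≥ ((1-ε)/σ₁) f(k/σ₁) for |k| ≤ Mσ₁, then for all |z| ≤ Mσ₂/9: Σ_k ξ_{z+k} ζ_{-k} ≥ (1-ε)³ (1 - Φ(M/4)) · (1/√(σ₁² + σ₂²)) f(z/√(σ₁² + σ₂²)). -/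
/-!
Completing the square, the product of the two Gaussian profiles at `z + k` and `k` is the
Gaussian of variance `σ₁² + σ₂²` at `z` times a Gaussian in `k` with mean
`c = -z σ₁² / (σ₁² + σ₂²)` and standard deviation `τ = σ₁ σ₂ / √(σ₁² + σ₂²) ∈ [σ₁ / 2, σ₁]`.
On the integer window `|k - c| ≤ M τ / 4` both approximate lower bounds apply. The Gaussian in `k`
is unimodal, so its Riemann sum over the window dominates its integral over
`[c - n, c - 1] ∪ [c + 1, c + n]`, `n = ⌊M τ / 4⌋`, which is
`2 (Φ(1 / τ) - Φ(n / τ)) / √(2π) ≥ (1 - ε)(1 - Φ(M / 4))` as soon as `τ ≥ 2 / ε`.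
-/

open MeasureTheory Real

noncomputable def gaussDens (x : ℝ) : ℝ := (1 / Real.sqrt (2 * Real.pi)) * Real.exp (-x ^ 2 / 2)

noncomputable def gaussTail (x : ℝ) : ℝ := ∫ u in Set.Ioi x, Real.exp (-u ^ 2 / 2)

open Set

lemma gaussDens_nonneg (x : ℝ) : 0 ≤ gaussDens x := by unfold gaussDens; positivity

lemma gaussDens_neg (x : ℝ) : gaussDens (-x) = gaussDens x := by simp [gaussDens]

lemma gaussDens_antitoneOn : AntitoneOn gaussDens (Ici 0) := fun x hx y _ hxy => by
  unfold gaussDens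
  gcongr

lemma integrable_exp_neg_sq_div_two : Integrable fun u : ℝ => exp (-u ^ 2 / 2) := by
  simpa [neg_div, div_eq_inv_mul] using integrable_exp_neg_mul_sq (b := 1 / 2) (by norm_num)

lemma integral_exp_neg_sq_div_two : ∫ u : ℝ, exp (-u ^ 2 / 2) = √(2 * π) := by
  convert integral_gaussian (1 / 2) using 3 with u
  · ring_nf
  · field_simp

lemma gaussTail_nonneg (x : ℝ) : 0 ≤ gaussTail x :=
  setIntegral_nonneg measurableSet_Ioi fun _ _ => (exp_pos _).le

lemma integral_exp_neg_sq_div_two_eq_gaussTail_sub (p q : ℝ) :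
    ∫ u in p..q, exp (-u ^ 2 / 2) = gaussTail p - gaussTail q :=
  (intervalIntegral.integral_Ioi_sub_Ioi' integrable_exp_neg_sq_div_two.integrableOn
    integrable_exp_neg_sq_div_two.integrableOn).symm

lemma gaussTail_neg (x : ℝ) : gaussTail (-x) = √(2 * π) - gaussTail x := by
  have hsplit := intervalIntegral.integral_Iic_add_Ioi (b := x)
    integrable_exp_neg_sq_div_two.integrableOn integrable_exp_neg_sq_div_two.integrableOn
  have hreflect := integral_comp_neg_Iic x fun u : ℝ => exp (-u ^ 2 / 2)
  simp only [neg_sq] at hreflect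
  rw [integral_exp_neg_sq_div_two] at hsplit
  unfold gaussTail
  linarith

lemma gaussTail_zero : gaussTail 0 = √(2 * π) / 2 := by
  have := gaussTail_neg 0
  rw [neg_zero] at this
  linarith

lemma gaussTail_sub_gaussTail_le {p q : ℝ} (hpq : p ≤ q) : gaussTail p - gaussTail q ≤ q - p := by
  rw [← integral_exp_neg_sq_div_two_eq_gaussTail_sub]
  calc ∫ u in p..q, exp (-u ^ 2 / 2) ≤ ∫ _ in p..q, (1 : ℝ) :=
        intervalIntegral.integral_mono_on hpq
          ((by fun_prop : Continuous fun u : ℝ => exp (-u ^ 2 / 2)).intervalIntegrable p q)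
          intervalIntegrable_const fun u _ => exp_le_one_iff.2 (by nlinarith [sq_nonneg u])
    _ = q - p := by simp

lemma AntitoneOn.integral_le_sum_Ico_int {f : ℝ → ℝ} {A : ℤ} {n : ℕ}
    (hf : AntitoneOn f (Icc (A : ℝ) (A + n))) :
    ∫ x in (A : ℝ)..A + n, f x ≤ ∑ k ∈ Finset.Ico A (A + n), f k := by
  rw [Int.Ico_eq_finset_map, Finset.sum_map]
  simpa using hf.integral_le_sum

lemma MonotoneOn.integral_le_sum_Ico_int {f : ℝ → ℝ} {A : ℤ} {n : ℕ}
    (hf : MonotoneOn f (Icc (A - 1 : ℝ) (A - 1 + n))) :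
    ∫ x in (A - 1 : ℝ)..A - 1 + n, f x ≤ ∑ k ∈ Finset.Ico A (A + n), f k := by
  rw [Int.Ico_eq_finset_map, Finset.sum_map]
  simpa using hf.integral_le_sum

lemma abs_sub_le_of_mem_Ico_ceil {μ : ℝ} {n : ℕ} {k : ℤ}
    (hk : k ∈ Finset.Ico (⌈μ⌉ - n) (⌈μ⌉ + n)) : |(k : ℝ) - μ| ≤ n := by
  rw [Finset.mem_Ico] at hk
  have hlo : (⌈μ⌉ : ℝ) - n ≤ k := by exact_mod_cast hk.1
  have hhi : (k : ℝ) + 1 ≤ ⌈μ⌉ + n := by exact_mod_cast hk.2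
  rw [abs_sub_le_iff]
  constructor <;> linarith [Int.le_ceil μ, Int.ceil_lt_add_one μ]

noncomputable def normalDens (μ s x : ℝ) : ℝ := 1 / s * gaussDens ((x - μ) / s)

lemma normalDens_nonneg {s : ℝ} (hs : 0 ≤ s) (μ x : ℝ) : 0 ≤ normalDens μ s x :=
  mul_nonneg (by positivity) (gaussDens_nonneg _)

lemma continuous_normalDens (μ s : ℝ) : Continuous (normalDens μ s) := by
  unfold normalDens gaussDens
  fun_prop

lemma div_mul_gaussDens_div (a s x : ℝ) : a / s * gaussDens (x / s) = a * normalDens 0 s x := by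
  simp only [normalDens, sub_zero]
  ring

lemma normalDens_zero_neg (s x : ℝ) : normalDens 0 s (-x) = normalDens 0 s x := by
  simp only [normalDens, sub_zero, neg_div, gaussDens_neg]

lemma normalDens_antitoneOn {s : ℝ} (hs : 0 < s) (μ : ℝ) : AntitoneOn (normalDens μ s) (Ici μ) :=
  fun x hx y hy hxy => by
    unfold normalDens
    gcongr 1 / s * ?_
    exact gaussDens_antitoneOn (div_nonneg (sub_nonneg.2 hx) hs.le)
      (div_nonneg (sub_nonneg.2 hy) hs.le) (by gcongr)

lemma normalDens_monotoneOn {s : ℝ} (hs : 0 < s) (μ : ℝ) : MonotoneOn (normalDens μ s) (Iic μ) :=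
  fun x hx y hy hxy => by
    unfold normalDens
    rw [← gaussDens_neg ((x - μ) / s), ← gaussDens_neg ((y - μ) / s), ← neg_div, ← neg_div,
      neg_sub, neg_sub]
    gcongr 1 / s * ?_
    exact gaussDens_antitoneOn (div_nonneg (sub_nonneg.2 hy) hs.le)
      (div_nonneg (sub_nonneg.2 hx) hs.le) (by gcongr)

lemma integral_normalDens {s : ℝ} (hs : s ≠ 0) (μ p q : ℝ) :
    ∫ x in p..q, normalDens μ s x =
      (gaussTail ((p - μ) / s) - gaussTail ((q - μ) / s)) / √(2 * π) := by
  simp only [normalDens, intervalIntegral.integral_const_mul]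
  rw [intervalIntegral.integral_comp_sub_right (fun x => gaussDens (x / s)),
    intervalIntegral.integral_comp_div _ hs]
  simp only [gaussDens, intervalIntegral.integral_const_mul,
    integral_exp_neg_sq_div_two_eq_gaussTail_sub, smul_eq_mul]
  field_simp

lemma normalDens_mul_normalDens {σ₁ σ₂ : ℝ} (h₁ : 0 < σ₁) (h₂ : 0 < σ₂) (z k : ℝ) :
    normalDens 0 σ₂ (z + k) * normalDens 0 σ₁ k =
      normalDens 0 √(σ₁ ^ 2 + σ₂ ^ 2) z *
        normalDens (-(z * σ₁ ^ 2 / (σ₁ ^ 2 + σ₂ ^ 2))) (σ₁ * σ₂ / √(σ₁ ^ 2 + σ₂ ^ 2)) k := by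
  have hs : 0 < σ₁ ^ 2 + σ₂ ^ 2 := by positivity
  have hσ : 0 < √(σ₁ ^ 2 + σ₂ ^ 2) := sqrt_pos.2 hs
  have hσsq : √(σ₁ ^ 2 + σ₂ ^ 2) ^ 2 = σ₁ ^ 2 + σ₂ ^ 2 := sq_sqrt hs.le
  simp only [normalDens, gaussDens, sub_zero]
  have hexp : -((z + k) / σ₂) ^ 2 / 2 + -(k / σ₁) ^ 2 / 2 =
      -(z / √(σ₁ ^ 2 + σ₂ ^ 2)) ^ 2 / 2 +
        -((k - -(z * σ₁ ^ 2 / (σ₁ ^ 2 + σ₂ ^ 2))) / (σ₁ * σ₂ / √(σ₁ ^ 2 + σ₂ ^ 2))) ^ 2 / 2 := by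
    simp only [div_pow, mul_pow, hσsq]
    field_simp
    ring
  calc _ = 1 / (σ₁ * σ₂) * (1 / √(2 * π)) ^ 2 *
        exp (-((z + k) / σ₂) ^ 2 / 2 + -(k / σ₁) ^ 2 / 2) := by rw [exp_add]; ring
    _ = _ := by rw [hexp, exp_add]; field_simp

section HalfWindow

variable {μ s : ℝ} {A : ℤ} {n : ℕ}

lemma gaussTail_sub_div_le_sum_normalDens_Ico_right (hs : 0 < s) (hA : μ ≤ A) (hA' : A ≤ μ + 1)
    (hn : 1 ≤ n) :
    (gaussTail (1 / s) - gaussTail (n / s)) / √(2 * π) ≤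
      ∑ k ∈ Finset.Ico A (A + n), normalDens μ s k := by
  have hn' : (1 : ℝ) ≤ n := by exact_mod_cast hn
  calc _ = ∫ x in μ + 1..μ + n, normalDens μ s x := by
        rw [integral_normalDens hs.ne', add_sub_cancel_left, add_sub_cancel_left]
    _ ≤ ∫ x in (A : ℝ)..A + n, normalDens μ s x :=
        intervalIntegral.integral_mono_interval hA' (by linarith) (by linarith)
          (Filter.Eventually.of_forall fun x => normalDens_nonneg hs.le μ x)
          ((continuous_normalDens μ s).intervalIntegrable _ _)
    _ ≤ _ := AntitoneOn.integral_le_sum_Ico_int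
        ((normalDens_antitoneOn hs μ).mono fun x hx => hA.trans hx.1)

lemma gaussTail_sub_div_le_sum_normalDens_Ico_left (hs : 0 < s) (hA : μ ≤ A) (hA' : A ≤ μ + 1)
    (hn : 1 ≤ n) :
    (gaussTail (1 / s) - gaussTail (n / s)) / √(2 * π) ≤
      ∑ k ∈ Finset.Ico (A - n) A, normalDens μ s k := by
  have hn' : (1 : ℝ) ≤ n := by exact_mod_cast hn
  calc _ = ∫ x in μ - n..μ - 1, normalDens μ s x := by
        rw [integral_normalDens hs.ne', sub_sub_cancel_left, sub_sub_cancel_left, neg_div, neg_div,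
          gaussTail_neg, gaussTail_neg]
        ring
    _ ≤ ∫ x in ((A - n : ℤ) - 1 : ℝ)..(A - n : ℤ) - 1 + n, normalDens μ s x := by
        push_cast
        exact intervalIntegral.integral_mono_interval (by linarith) (by linarith) (by linarith)
          (Filter.Eventually.of_forall fun x => normalDens_nonneg hs.le μ x)
          ((continuous_normalDens μ s).intervalIntegrable _ _)
    _ ≤ ∑ k ∈ Finset.Ico (A - n) (A - n + n), normalDens μ s k :=
        MonotoneOn.integral_le_sum_Ico_int ((normalDens_monotoneOn hs μ).mono fun x hx => by
          push_cast at hx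
          exact hx.2.trans (by linarith))
    _ = _ := by rw [sub_add_cancel]

end HalfWindow

lemma two_mul_gaussTail_sub_div_le_sum_normalDens_Ico {s : ℝ} (hs : 0 < s) (μ : ℝ) {n : ℕ}
    (hn : 1 ≤ n) :
    2 * (gaussTail (1 / s) - gaussTail (n / s)) / √(2 * π) ≤
      ∑ k ∈ Finset.Ico (⌈μ⌉ - n) (⌈μ⌉ + n), normalDens μ s k := by
  have hμ := Int.le_ceil μ
  have hμ' := (Int.ceil_lt_add_one μ).le
  rw [← Finset.Ico_union_Ico_eq_Ico (by omega : ⌈μ⌉ - n ≤ ⌈μ⌉) (by omega),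
    Finset.sum_union (Finset.Ico_disjoint_Ico_consecutive _ _ _)]
  rw [mul_div_assoc, two_mul]
  exact add_le_add (gaussTail_sub_div_le_sum_normalDens_Ico_left hs hμ hμ' hn)
    (gaussTail_sub_div_le_sum_normalDens_Ico_right hs hμ hμ' hn)

lemma mul_one_sub_gaussTail_le {ε s r t : ℝ} (hε : ε ≤ 1 / 10) (hs : 0 < s) (hεs : 2 / s ≤ ε)
    (ht : r - 1 / s ≤ t) (htr : t ≤ r) :
    (1 - ε) * (1 - gaussTail r) ≤ 2 * (gaussTail (1 / s) - gaussTail t) / √(2 * π) := by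
  have hπ : 12 / 5 ≤ √(2 * π) :=
    (le_sqrt (by norm_num) (by positivity)).2 (by nlinarith [pi_gt_three])
  have hε0 : 0 < ε := (by positivity : 0 < 2 / s).trans_le hεs
  have hΦ := gaussTail_nonneg r
  have hhead := gaussTail_sub_gaussTail_le (by positivity : (0 : ℝ) ≤ 1 / s)
  have htail := gaussTail_sub_gaussTail_le htr
  rw [gaussTail_zero] at hhead
  have hQ : 0 ≤ √(2 * π) * (1 - ε) - 2 := by nlinarith
  rw [le_div_iff₀ (by positivity)]
  have h4 : 4 * (1 / s) ≤ 2 * ε := by linarith [show 2 / s = 2 * (1 / s) by ring]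
  nlinarith [mul_nonneg hΦ hQ, mul_nonneg hε0.le (sub_nonneg.2 hπ)]

lemma mul_one_sub_gaussTail_le_sum_normalDens_Ico {ε M τ : ℝ} (hε₀ : 0 < ε) (hε : ε ≤ 1 / 10)
    (hM : 1 ≤ M) (hετ : 2 ≤ ε * τ) (c : ℝ) :
    (1 - ε) * (1 - gaussTail (M / 4)) ≤
      ∑ k ∈ Finset.Ico (⌈c⌉ - ⌊M * τ / 4⌋₊) (⌈c⌉ + ⌊M * τ / 4⌋₊), normalDens c τ k := by
  have hτ₀ : 0 < τ := pos_of_mul_pos_right (by linarith) hε₀.le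
  have hτ : 20 ≤ τ := by nlinarith [mul_le_mul_of_nonneg_right hε hτ₀.le]
  have hn : M * τ / 4 - 1 ≤ ⌊M * τ / 4⌋₊ := by linarith [Nat.lt_floor_add_one (M * τ / 4)]
  have hn' : (⌊M * τ / 4⌋₊ : ℝ) ≤ M * τ / 4 := Nat.floor_le (by positivity)
  have hn₁ : 1 ≤ ⌊M * τ / 4⌋₊ := Nat.le_floor (by push_cast; nlinarith)
  refine (mul_one_sub_gaussTail_le hε hτ₀ ?_ ?_ ?_).trans
    (two_mul_gaussTail_sub_div_le_sum_normalDens_Ico hτ₀ c hn₁)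
  · rw [div_le_iff₀ hτ₀]; linarith
  · rw [sub_le_iff_le_add, ← add_div, le_div_iff₀ hτ₀]; linarith
  · rw [div_le_iff₀ hτ₀]; linarith

lemma mul_div_sqrt_sq_add_sq_le {σ₁ σ₂ : ℝ} (h₁ : 0 ≤ σ₁) (h₂ : 0 < σ₂) :
    σ₁ * σ₂ / √(σ₁ ^ 2 + σ₂ ^ 2) ≤ σ₁ := by
  have : σ₂ ≤ √(σ₁ ^ 2 + σ₂ ^ 2) := le_sqrt_of_sq_le (by nlinarith)
  rw [div_le_iff₀ (h₂.trans_le this)]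
  exact mul_le_mul_of_nonneg_left this h₁

lemma half_le_mul_div_sqrt_sq_add_sq {σ₁ σ₂ : ℝ} (h₁ : 0 ≤ σ₁) (h₁₂ : σ₁ ≤ σ₂) :
    σ₁ / 2 ≤ σ₁ * σ₂ / √(σ₁ ^ 2 + σ₂ ^ 2) := by
  have : √(σ₁ ^ 2 + σ₂ ^ 2) ≤ 2 * σ₂ := sqrt_le_iff.2 ⟨by linarith, by nlinarith⟩
  rcases (sqrt_nonneg (σ₁ ^ 2 + σ₂ ^ 2)).eq_or_lt with h | h
  · rw [← h, div_zero]; nlinarith [sq_sqrt (by positivity : 0 ≤ σ₁ ^ 2 + σ₂ ^ 2)]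
  rw [le_div_iff₀ h]
  nlinarith

lemma abs_mul_sq_div_sq_add_sq_le {σ₁ σ₂ : ℝ} (h₁ : 0 ≤ σ₁) (h₂ : 0 < σ₂) (z : ℝ) :
    |z * σ₁ ^ 2 / (σ₁ ^ 2 + σ₂ ^ 2)| ≤ |z| * σ₁ / σ₂ := by
  have hs : 0 < σ₁ ^ 2 + σ₂ ^ 2 := by positivity
  have hmean : σ₁ * σ₂ ≤ σ₁ ^ 2 + σ₂ ^ 2 := by nlinarith [sq_nonneg (σ₁ - σ₂)]
  rw [abs_div, abs_mul, abs_of_nonneg (sq_nonneg σ₁), abs_of_pos hs, div_le_div_iff₀ hs h₂]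
  nlinarith [mul_le_mul_of_nonneg_left hmean (mul_nonneg (abs_nonneg z) h₁)]

lemma abs_le_and_abs_add_le_of_abs_sub_le {M σ₁ σ₂ z k c : ℝ} (hM : 0 ≤ M) (h₁₂ : σ₁ ≤ σ₂)
    (hz : |z| ≤ M * σ₂ / 9) (hc : |c| ≤ M * σ₁ / 9) (hkc : |k - c| ≤ M * σ₁ / 4) :
    |k| ≤ M * σ₁ ∧ |z + k| ≤ M * σ₂ := by
  have hk : |k| ≤ 13 / 36 * (M * σ₁) := by linarith [abs_sub_abs_le_abs_sub k c]
  have hMσ : M * σ₁ ≤ M * σ₂ := mul_le_mul_of_nonneg_left h₁₂ hM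
  exact ⟨by linarith [abs_nonneg k], by linarith [abs_add_le z k, abs_nonneg z]⟩

lemma sq_mul_normalDens_le_of_approx {M ε σ₁ σ₂ : ℝ} {ξ ζ : ℤ → ℝ} (hε : ε ≤ 1) (hσ₁ : 0 < σ₁)
    (h₁₂ : σ₁ ≤ σ₂)
    (hξ : ∀ k : ℤ, |(k : ℝ)| ≤ M * σ₂ → (1 - ε) / σ₂ * gaussDens (k / σ₂) ≤ ξ k)
    (hζ : ∀ k : ℤ, |(k : ℝ)| ≤ M * σ₁ → (1 - ε) / σ₁ * gaussDens (k / σ₁) ≤ ζ k)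
    {z k : ℤ} (hk : |(k : ℝ)| ≤ M * σ₁) (hzk : |(z : ℝ) + k| ≤ M * σ₂) :
    (1 - ε) ^ 2 * (normalDens 0 √(σ₁ ^ 2 + σ₂ ^ 2) z *
        normalDens (-(z * σ₁ ^ 2 / (σ₁ ^ 2 + σ₂ ^ 2))) (σ₁ * σ₂ / √(σ₁ ^ 2 + σ₂ ^ 2)) k) ≤
      ξ (z + k) * ζ (-k) := by
  have hσ₂ : 0 < σ₂ := hσ₁.trans_le h₁₂
  have hξk := hξ (z + k) (by push_cast; exact hzk)
  have hζk := hζ (-k) (by rwa [Int.cast_neg, abs_neg])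
  push_cast at hξk hζk
  rw [div_mul_gaussDens_div] at hξk hζk
  rw [normalDens_zero_neg] at hζk
  rw [← normalDens_mul_normalDens hσ₁ hσ₂]
  have h₁ : 0 ≤ (1 - ε) * normalDens 0 σ₁ k :=
    mul_nonneg (by linarith) (normalDens_nonneg hσ₁.le _ _)
  have h₂ : 0 ≤ (1 - ε) * normalDens 0 σ₂ (z + k) :=
    mul_nonneg (by linarith) (normalDens_nonneg hσ₂.le _ _)
  calc _ = ((1 - ε) * normalDens 0 σ₂ (z + k)) * ((1 - ε) * normalDens 0 σ₁ k) := by ring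
    _ ≤ _ := mul_le_mul hξk hζk h₁ (h₂.trans hξk)

lemma ENNReal.ofReal_mul_le_tsum {α : Type*} {C m : ℝ} {g F : α → ℝ} (s : Finset α) (hC : 0 ≤ C)
    (hm : m ≤ ∑ a ∈ s, g a) (hF : ∀ a, 0 ≤ F a) (hgF : ∀ a ∈ s, C * g a ≤ F a) :
    ENNReal.ofReal (C * m) ≤ ∑' a, ENNReal.ofReal (F a) := calc
  _ ≤ ENNReal.ofReal (∑ a ∈ s, F a) := ENNReal.ofReal_le_ofReal <| calc
      C * m ≤ C * ∑ a ∈ s, g a := mul_le_mul_of_nonneg_left hm hC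
      _ = ∑ a ∈ s, C * g a := Finset.mul_sum s g C
      _ ≤ _ := Finset.sum_le_sum hgF
  _ = ∑ a ∈ s, ENNReal.ofReal (F a) := ENNReal.ofReal_sum_of_nonneg fun a _ => hF a
  _ ≤ _ := ENNReal.sum_le_tsum s

theorem convolution_of_approximate_discrete_gaussians :
    ∃ ε₀ : ℝ, 0 < ε₀ ∧
      ∀ (M ε : ℝ), 1 ≤ M → 0 < ε → ε ≤ ε₀ →
        ∃ σ₀ : ℝ, ∀ σ₁ σ₂ : ℝ, σ₀ < σ₁ → σ₁ ≤ σ₂ →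
          ∀ (ξ ζ : ℤ → ℝ), (∀ k, 0 < ξ k) → (∀ k, 0 < ζ k) →
            (∀ k : ℤ, |(k : ℝ)| ≤ M * σ₂ →
              ((1 - ε) / σ₂) * gaussDens ((k : ℝ) / σ₂) ≤ ξ k) →
            (∀ k : ℤ, |(k : ℝ)| ≤ M * σ₁ →
              ((1 - ε) / σ₁) * gaussDens ((k : ℝ) / σ₁) ≤ ζ k) →
            ∀ z : ℤ, |(z : ℝ)| ≤ M * σ₂ / 9 →
              ENNReal.ofReal ((1 - ε) ^ 3 * (1 - gaussTail (M / 4)) *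
                  (1 / Real.sqrt (σ₁ ^ 2 + σ₂ ^ 2)) *
                  gaussDens ((z : ℝ) / Real.sqrt (σ₁ ^ 2 + σ₂ ^ 2)))
                ≤ ∑' k : ℤ, ENNReal.ofReal (ξ (z + k) * ζ (-k)) := by
  refine ⟨1 / 10, by norm_num, fun M ε hM hε hε₀ =>
    ⟨4 / ε, fun σ₁ σ₂ hσ₁ h₁₂ ξ ζ hξ₀ hζ₀ hξ hζ z hz => ?_⟩⟩
  have hσ₁₀ : 0 < σ₁ := (by positivity : 0 < 4 / ε).trans hσ₁
  have hσ₂₀ : 0 < σ₂ := hσ₁₀.trans_le h₁₂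
  set c := -((z : ℝ) * σ₁ ^ 2 / (σ₁ ^ 2 + σ₂ ^ 2))
  set τ := σ₁ * σ₂ / √(σ₁ ^ 2 + σ₂ ^ 2)
  have hτ_le : τ ≤ σ₁ := mul_div_sqrt_sq_add_sq_le hσ₁₀.le hσ₂₀
  have hετ : 2 ≤ ε * τ := by
    rw [div_lt_iff₀ hε] at hσ₁
    nlinarith [mul_le_mul_of_nonneg_left (half_le_mul_div_sqrt_sq_add_sq hσ₁₀.le h₁₂) hε.le]
  have hc : |c| ≤ M * σ₁ / 9 := by
    rw [abs_neg]
    refine (abs_mul_sq_div_sq_add_sq_le hσ₁₀.le hσ₂₀ _).trans ?_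
    rw [div_le_iff₀ hσ₂₀]
    nlinarith [mul_le_mul_of_nonneg_right hz hσ₁₀.le]
  have hterm : ∀ k ∈ Finset.Ico (⌈c⌉ - ⌊M * τ / 4⌋₊) (⌈c⌉ + ⌊M * τ / 4⌋₊),
      (1 - ε) ^ 2 * normalDens 0 √(σ₁ ^ 2 + σ₂ ^ 2) z * normalDens c τ k ≤ ξ (z + k) * ζ (-k) := by
    intro k hk
    have hkc : |(k : ℝ) - c| ≤ M * σ₁ / 4 := (abs_sub_le_of_mem_Ico_ceil hk).trans <|
      (Nat.floor_le (by positivity)).trans (by nlinarith)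
    obtain ⟨hk₁, hk₂⟩ := abs_le_and_abs_add_le_of_abs_sub_le (by linarith) h₁₂ hz hc hkc
    rw [mul_assoc]
    exact sq_mul_normalDens_le_of_approx (by linarith) hσ₁₀ h₁₂ hξ hζ hk₁ hk₂
  calc ENNReal.ofReal _ = ENNReal.ofReal ((1 - ε) ^ 2 * normalDens 0 √(σ₁ ^ 2 + σ₂ ^ 2) z *
        ((1 - ε) * (1 - gaussTail (M / 4)))) := by
        simp only [normalDens, sub_zero]
        ring_nf
    _ ≤ _ := ENNReal.ofReal_mul_le_tsum _
        (mul_nonneg (by positivity) (normalDens_nonneg (sqrt_nonneg _) 0 z))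
        (mul_one_sub_gaussTail_le_sum_normalDens_Ico hε (by linarith) hM hετ c)
        (fun k => (mul_pos (hξ₀ _) (hζ₀ _)).le) hterm
end
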